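/- Let p, q ∈ ℚ∞ with p > q, t(p) = 0 and t(q) = 1. Then for all x, y ∈ H: ⟨v_p^x, v_q^y⟩ = ⟨v₀^x, v₁^y⟩ - (d(p,q) + 1)/2 (note that d(p,q) is odd in this situation). -/
import Mathlib


open Matrix

abbrev V6 := Fin 6 → ℤ

def C6 : Matrix (Fin 6) (Fin 6) ℤ :=
  !![1,0,-1,-1,1,1;
     0,1,-1,-1,1,1;
     0,0,1,0,-1,-1;
     0,0,0,1,-1,-1;
     0,0,0,0,1,0;
     0,0,0,0,0,1]

/-- The bilinear form `⟨x,y⟩ = xᵀ C y` on `ℤ^6`. -/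
def form (x y : V6) : ℤ := x ⬝ᵥ C6.mulVec y

/-- The quaternion `i`. -/
def qI : Quaternion ℤ := ⟨0,1,0,0⟩
/-- The quaternion `j`. -/
def qJ : Quaternion ℤ := ⟨0,0,1,0⟩
/-- The quaternion `k`. -/
def qK : Quaternion ℤ := ⟨0,0,0,1⟩

instance : DecidableEq (Quaternion ℤ) := fun x y =>
  decidable_of_iff (x.re = y.re ∧ x.imI = y.imI ∧ x.imJ = y.imJ ∧ x.imK = y.imK)
    ⟨fun ⟨h1, h2, h3, h4⟩ => QuaternionAlgebra.ext h1 h2 h3 h4,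
     fun h => by subst h; exact ⟨rfl, rfl, rfl, rfl⟩⟩

/-- The quaternion group `H = {±1, ±i, ±j, ±k}`. -/
def Hset : Finset (Quaternion ℤ) := {1, -1, qI, -qI, qJ, -qJ, qK, -qK}

/-- The subset `H⁺ = {1, i, j, k}`. -/
def Hplus : Finset (Quaternion ℤ) := {1, qI, qJ, qK}

/-- Index type for the three special slopes `0`, `1`, `∞`. -/
inductive Ty | zero | one | inf
deriving DecidableEq

def h0 : V6 := ![0,0,1,1,1,1]
def h1 : V6 := ![1,1,2,2,1,1]
def hinf : V6 := ![1,1,1,1,0,0]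

def hTy : Ty → V6
  | .zero => h0
  | .one => h1
  | .inf => hinf

/-- The vectors `v_t^x` for `t ∈ {0,1,∞}` and `x ∈ H⁺`. -/
def vposTy : Ty → Quaternion ℤ → V6
  | .zero, x => if x = 1 then ![0,0,1,0,1,0] else if x = qI then ![-1,0,0,0,0,0]
      else if x = qJ then ![0,0,1,0,0,1] else ![0,1,1,1,1,1]
  | .one, x => if x = 1 then ![1,0,1,1,1,0] else if x = qI then ![0,1,1,1,1,0]
      else if x = qJ then ![0,0,1,0,0,0] else ![1,1,2,1,1,1]
  | .inf, x => if x = 1 then ![1,0,0,1,0,0] else if x = qI then ![1,1,1,1,1,0]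
      else if x = qJ then ![0,0,0,0,0,-1] else ![1,0,1,0,0,0]

/-- The vectors `v_t^x` for `t ∈ {0,1,∞}` and `x ∈ H`, with `v_t^{-x} = h_t - v_t^x`. -/
def vTy (t : Ty) (x : Quaternion ℤ) : V6 :=
  if x ∈ Hplus then vposTy t x else hTy t - vposTy t (-x)

/-- `a(q)`: numerator, with `a(∞) = 1`. -/
def aQ : WithTop ℚ → ℤ := WithTop.recTopCoe 1 Rat.num

/-- `b(q)`: denominator, with `b(∞) = 0`. -/
def bQ : WithTop ℚ → ℤ := WithTop.recTopCoe 0 (fun x => (x.den : ℤ))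

/-- The type `t(q) ∈ {0,1,∞}` of a slope `q`. -/
def tyQ (q : WithTop ℚ) : Ty :=
  if aQ q % 2 = 0 then Ty.zero else if bQ q % 2 = 1 then Ty.one else Ty.inf

/-- `⌊n⌋₂ = n/2` for even `n` and `(n-1)/2` for odd `n`. -/
def half2 (n : ℤ) : ℤ := if Even n then n / 2 else (n - 1) / 2

/-- `h_q = b(q)·h₀ + a(q)·h_∞`. -/
def hQ (q : WithTop ℚ) : V6 := bQ q • h0 + aQ q • hinf

/-- `v_q^x = v_{t(q)}^x + ⌊b(q)⌋₂·h₀ + ⌊a(q)⌋₂·h_∞`. -/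
def vQ (q : WithTop ℚ) (x : Quaternion ℤ) : V6 :=
  vTy (tyQ q) x + half2 (bQ q) • h0 + half2 (aQ q) • hinf

/-- `rk e = ⟨e, h_∞⟩`. -/
def rk (e : V6) : ℤ := form e hinf

/-- `deg e = ⟨h₀, e⟩`. -/
def degV (e : V6) : ℤ := form h0 e

/-- `e` is positive if `rk e > 0`, or `rk e = 0` and `deg e > 0`. -/
def PosV (e : V6) : Prop := 0 < rk e ∨ (rk e = 0 ∧ 0 < degV e)

/-- `d(p,q) = |a(q)b(p) - a(p)b(q)|`. -/
def dQ (p q : WithTop ℚ) : ℤ := |aQ q * bQ p - aQ p * bQ q|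

/-- Complexity `c(p) = |a(p)| + |b(p)| + |a(p)+b(p)|`. -/
def cpx (p : WithTop ℚ) : ℤ := |aQ p| + |bQ p| + |aQ p + bQ p|

lemma expand13 (u w : V6) (A B A' B' : ℤ) (h1 : form u h0 = 0) (h2 : form u hinf = 1)
    (h3 : form h0 w = 1) (h4 : form hinf w = -1) :
    form (u + B • h0 + A • hinf) (w + B' • h0 + A' • hinf)
      = form u w + A' + B - A + 2*B*A' - 2*A*B' := by
  have e1 : form h0 h0 = 0 := by decide
  have e2 : form h0 hinf = 2 := by decide
  have e3 : form hinf h0 = -2 := by decide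
  have e4 : form hinf hinf = 0 := by decide
  simp only [form] at *
  simp only [Matrix.mulVec_add, Matrix.mulVec_smul, dotProduct_add, add_dotProduct,
    dotProduct_smul, smul_dotProduct, smul_eq_mul, h1, h2, h3, h4, e1, e2, e3, e4]
  ring

lemma vals0 (x : Quaternion ℤ) (hx : x ∈ Hset) :
    form (vTy .zero x) h0 = 0 ∧ form (vTy .zero x) hinf = 1 := by
  fin_cases hx <;> decide

lemma vals1 (y : Quaternion ℤ) (hy : y ∈ Hset) :
    form h0 (vTy .one y) = 1 ∧ form hinf (vTy .one y) = -1 := by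
  fin_cases hy <;> decide

theorem stmt13 (p q : WithTop ℚ) (hpq : q < p) (hp : tyQ p = Ty.zero) (hq : tyQ q = Ty.one)
    (x y : Quaternion ℤ) (hx : x ∈ Hset) (hy : y ∈ Hset) :
    form (vQ p x) (vQ q y) = form (vTy .zero x) (vTy .one y) - (dQ p q + 1) / 2 := by
  -- p and q are rational
  cases p with
  | top =>
    exfalso
    have : tyQ ⊤ = Ty.inf := by decide
    rw [this] at hp; cases hp
  | coe p' =>
  cases q with
  | top => exact absurd hpq (by simp)
  | coe q' =>
  have hap' : aQ (↑p' : WithTop ℚ) = p'.num := rfl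
  have hbp' : bQ (↑p' : WithTop ℚ) = (p'.den : ℤ) := rfl
  have haq' : aQ (↑q' : WithTop ℚ) = q'.num := rfl
  have hbq' : bQ (↑q' : WithTop ℚ) = (q'.den : ℤ) := rfl
  -- parities
  have hapE : p'.num % 2 = 0 := by
    by_contra h
    rw [tyQ, hap', if_neg h] at hp
    split_ifs at hp <;> cases hp
  have haqO : q'.num % 2 = 1 := by
    by_contra h
    have h0' : q'.num % 2 = 0 := by omega
    rw [tyQ, haq', if_pos h0'] at hq; cases hq
  have hbqO : (q'.den : ℤ) % 2 = 1 := by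
    have h1 : ¬ q'.num % 2 = 0 := by omega
    rw [tyQ, haq', hbq', if_neg h1] at hq
    by_contra h
    rw [if_neg h] at hq; cases hq
  have hbpO : (p'.den : ℤ) % 2 = 1 := by
    have hc := p'.reduced
    rcases Nat.even_or_odd p'.den with he | ho
    · exfalso
      have h2num : (2 : ℕ) ∣ p'.num.natAbs := by
        have : (2 : ℤ) ∣ p'.num := by omega
        exact Int.natAbs_dvd_natAbs.mpr (by simpa using this)
      have h2den : (2 : ℕ) ∣ p'.den := he.two_dvd
      have := Nat.Coprime.eq_one_of_dvd (Nat.Coprime.coprime_dvd_left h2num hc) h2den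
      omega
    · rw [Nat.odd_iff] at ho
      omega
  -- the order
  have hlt : q' < p' := by exact_mod_cast hpq
  have hnum : q'.num * (p'.den : ℤ) < p'.num * (q'.den : ℤ) := by
    have h2 : (q'.num : ℚ) / q'.den < (p'.num : ℚ) / p'.den := by
      rw [Rat.num_div_den, Rat.num_div_den]; exact hlt
    rw [div_lt_div_iff₀ (by exact_mod_cast q'.den_pos) (by exact_mod_cast p'.den_pos)] at h2
    exact_mod_cast h2
  -- dQ value
  have hd : dQ ↑p' ↑q' = p'.num * (q'.den : ℤ) - q'.num * (p'.den : ℤ) := by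
    rw [dQ, hap', hbp', haq', hbq', abs_of_nonpos (by omega)]; ring
  -- rewrite vQ
  rw [vQ, vQ, hp, hq, hap', hbp', haq', hbq']
  -- half2 values
  set A := half2 p'.num with hA
  set B := half2 ((p'.den : ℤ)) with hB
  set A' := half2 q'.num with hA'
  set B' := half2 ((q'.den : ℤ)) with hB'
  have h2A : 2 * A = p'.num := by rw [hA, half2, if_pos (Int.even_iff.mpr hapE)]; omega
  have h2B : 2 * B + 1 = (p'.den : ℤ) := by
    rw [hB, half2, if_neg (by rw [Int.even_iff]; omega)]; omega
  have h2A' : 2 * A' + 1 = q'.num := by rw [hA', half2, if_neg (by rw [Int.even_iff]; omega)]; omega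
  have h2B' : 2 * B' + 1 = (q'.den : ℤ) := by rw [hB', half2, if_neg (by rw [Int.even_iff]; omega)]; omega
  obtain ⟨hu1, hu2⟩ := vals0 x hx
  obtain ⟨hw1, hw2⟩ := vals1 y hy
  rw [expand13 _ _ A B A' B' hu1 hu2 hw1 hw2]
  have hE : dQ ↑p' ↑q' + 1 = -2 * (A' + B - A + 2*B*A' - 2*A*B') := by
    rw [hd, ← h2A, ← h2B, ← h2A', ← h2B']; ring
  generalize hG : A' + B - A + 2*B*A' - 2*A*B' = E at hE ⊢
  omega
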